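/- arXiv:2006.11151 — 5 statements merged into one kernel-verified Lean document; each statement's English description precedes it below -/
import Mathlib

section
/- For third-order tensors A of size n×n×p and B of size n×s×p, the block circulant matrix of their T-product equals the product of their block circulant matrices: bcirc(A * B) = bcirc(A) · bcirc(B). -/
open Matrix BigOperators

variable {p : ℕ}

/-- Block circulant matrix of a third-order tensor (tensor = family of frontal slices). -/
def bcirc {I J : Type*} (A : Fin p → Matrix I J ℝ) :
    Matrix (Fin p × I) (Fin p × J) ℝ :=
  Matrix.of fun ik jl => A (ik.1 - jl.1) ik.2 jl.2

/-- T-product of third-order tensors: `(A*B)^(k) = Σ_j A^(k-j) B^(j)` (indices mod p),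
which is exactly `fold(bcirc(A) · unfold(B))`. -/
def tProd {I J K : Type*} [Fintype J] (A : Fin p → Matrix I J ℝ)
    (B : Fin p → Matrix J K ℝ) : Fin p → Matrix I K ℝ :=
  fun k => ∑ j : Fin p, A (k - j) * B j

/-- Tensor transpose: transpose each frontal slice and reverse slices 2..p. -/
def ttrans {I J : Type*} (A : Fin p → Matrix I J ℝ) :
    Fin p → Matrix J I ℝ :=
  fun k => (A (-k))ᵀ

/-- Identity tensor: first frontal slice the identity matrix, other slices zero. -/
def tid (I : Type*) [DecidableEq I] [NeZero p] : Fin p → Matrix I I ℝ :=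
  fun k => if k = 0 then 1 else 0

/-- Entrywise (Frobenius) inner product of third-order tensors. -/
def tinner {I J : Type*} [Fintype I] [Fintype J]
    (X Y : Fin p → Matrix I J ℝ) : ℝ :=
  ∑ k, ∑ i, ∑ j, X k i j * Y k i j

/-- Symmetric T-positive semidefinite tensor. -/
def TPSD {I : Type*} [Fintype I] (A : Fin p → Matrix I I ℝ) : Prop :=
  ttrans A = A ∧ ∀ X : Fin p → Matrix I (Fin 1) ℝ, 0 ≤ tinner X (tProd A X)

/-- Symmetric T-positive definite tensor. -/
def TPD {I : Type*} [Fintype I] (A : Fin p → Matrix I I ℝ) : Prop :=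
  ttrans A = A ∧ ∀ X : Fin p → Matrix I (Fin 1) ℝ, X ≠ 0 → 0 < tinner X (tProd A X)

/-- k-fold T-product power of a tensor, with `tpow A 0` the identity tensor. -/
def tpow {I : Type*} [Fintype I] [DecidableEq I] [NeZero p]
    (A : Fin p → Matrix I I ℝ) : ℕ → Fin p → Matrix I I ℝ
  | 0 => tid I
  | k + 1 => tProd A (tpow A k)

/-- bcirc(A * B) = bcirc(A) · bcirc(B). -/
theorem bcirc_tprod {n s p : ℕ} (A : Fin p → Matrix (Fin n) (Fin n) ℝ)
    (B : Fin p → Matrix (Fin n) (Fin s) ℝ) :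
    bcirc (tProd A B) = bcirc A * bcirc B := by
  cases p with
  | zero => ext ⟨k, _⟩ _; exact k.elim0
  | succ p =>
    ext ⟨k, i⟩ ⟨l, j⟩
    simp only [bcirc, tProd, Matrix.mul_apply, Matrix.of_apply, Matrix.sum_apply,
      Fintype.sum_prod_type]
    refine Fintype.sum_equiv (Equiv.addRight l) _ _ fun m => ?_
    simp [sub_add_eq_sub_sub, sub_right_comm]
end

section
/- A frontal-square tensor A ∈ ℝ^{n×n×p} has a T-inverse (i.e., there exists B with A*B = B*A = I_{nnp}) if and only if the matrix bcirc(A) is invertible, in which case bcirc(A⁻¹) = bcirc(A)⁻¹. -/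
open Matrix BigOperators

variable {p : ℕ}

/-! The matrices `bcirc A` are exactly those invariant under simultaneously shifting row and
column blocks by the same amount, and conjugating by that shift permutation commutes with
taking the inverse. So `(bcirc A)⁻¹` is again block circulant, `bcirc B` say, and since `bcirc`
turns the T-product into the matrix product and is injective, `B` is the T-inverse of `A`. -/

section BlockCirculant

variable {I J K : Type*}

lemma bcirc_tProd [Fintype J] [NeZero p] (A : Fin p → Matrix I J ℝ) (B : Fin p → Matrix J K ℝ) :
    bcirc (tProd A B) = bcirc A * bcirc B := by
  ext ⟨k, i⟩ ⟨l, j⟩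
  simp only [bcirc, tProd, Matrix.of_apply, Matrix.sum_apply, Matrix.mul_apply,
    Fintype.sum_prod_type]
  refine Fintype.sum_equiv (Equiv.addRight l) _ _ fun m => Finset.sum_congr rfl fun s _ => ?_
  simp [sub_add_eq_sub_sub, sub_right_comm]

lemma bcirc_tid [DecidableEq I] [NeZero p] : bcirc (tid I : Fin p → _) = 1 := by
  ext ⟨k, i⟩ ⟨l, j⟩
  by_cases h : k = l <;> simp [bcirc, tid, Matrix.one_apply, sub_eq_zero, h]

lemma bcirc_injective [NeZero p] : Function.Injective (bcirc : (Fin p → Matrix I J ℝ) → _) := by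
  intro A B h
  funext k
  ext i j
  simpa [bcirc] using congrFun (congrFun h (k, i)) (0, j)

def blockShift [NeZero p] (I : Type*) (l : Fin p) : Fin p × I ≃ Fin p × I :=
  Equiv.prodCongr (Equiv.addRight l) (Equiv.refl I)

lemma bcirc_submatrix_blockShift [NeZero p] (A : Fin p → Matrix I J ℝ) (l : Fin p) :
    (bcirc A).submatrix (blockShift I l) (blockShift J l) = bcirc A := by
  ext ⟨k, i⟩ ⟨m, j⟩
  simp [bcirc, blockShift]

lemma eq_bcirc_of_submatrix_blockShift [NeZero p] (M : Matrix (Fin p × I) (Fin p × J) ℝ)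
    (hM : ∀ l, M.submatrix (blockShift I l) (blockShift J l) = M) :
    M = bcirc fun k => Matrix.of fun i j => M (k, i) (0, j) := by
  ext ⟨k, i⟩ ⟨m, j⟩
  simpa [bcirc, blockShift] using congrFun (congrFun (hM m) (k - m, i)) (0, j)

lemma exists_bcirc_eq_inv [Fintype I] [DecidableEq I] [NeZero p] (A : Fin p → Matrix I I ℝ) :
    ∃ B : Fin p → Matrix I I ℝ, bcirc B = (bcirc A)⁻¹ := by
  refine ⟨_, (eq_bcirc_of_submatrix_blockShift _ fun l => ?_).symm⟩
  rw [← inv_submatrix_equiv, bcirc_submatrix_blockShift]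

lemma tProd_eq_tid_iff [Fintype I] [DecidableEq I] [NeZero p] (A B : Fin p → Matrix I I ℝ) :
    tProd A B = tid I ↔ bcirc A * bcirc B = 1 := by
  rw [← bcirc_tProd, ← bcirc_tid, bcirc_injective.eq_iff]

end BlockCirculant

/-- A has a T-inverse iff bcirc(A) is invertible, and in that case
bcirc(A⁻¹) = bcirc(A)⁻¹. -/
theorem tinv_iff_bcirc_isUnit {n p : ℕ} [NeZero p]
    (A : Fin p → Matrix (Fin n) (Fin n) ℝ) :
    ((∃ B : Fin p → Matrix (Fin n) (Fin n) ℝ,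
        tProd A B = tid (Fin n) ∧ tProd B A = tid (Fin n)) ↔ IsUnit (bcirc A)) ∧
    (∀ B : Fin p → Matrix (Fin n) (Fin n) ℝ,
        tProd A B = tid (Fin n) → tProd B A = tid (Fin n) → bcirc B = (bcirc A)⁻¹) := by
  refine ⟨⟨?_, fun hA => ?_⟩, fun B hAB _ => ?_⟩
  · rintro ⟨B, hAB, hBA⟩
    exact ⟨⟨bcirc A, bcirc B, (tProd_eq_tid_iff A B).1 hAB, (tProd_eq_tid_iff B A).1 hBA⟩, rfl⟩
  · have hdet := (isUnit_iff_isUnit_det _).mp hA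
    obtain ⟨B, hB⟩ := exists_bcirc_eq_inv A
    refine ⟨B, ?_, ?_⟩
    · rw [tProd_eq_tid_iff, hB, mul_nonsing_inv _ hdet]
    · rw [tProd_eq_tid_iff, hB, nonsing_inv_mul _ hdet]
  · exact (inv_eq_right_inv ((tProd_eq_tid_iff A B).1 hAB)).symm
end

section
/- The map bcirc from third-order tensors of size n×n×p to np×np block circulant matrices is an injective algebra homomorphism with respect to the T-product: it is linear, multiplicative (bcirc(A*B)=bcirc(A)bcirc(B)), maps the identity tensor to the identity matrix, and bcirc(A) = 0 implies A = 0. -/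
open Matrix BigOperators

variable {p : ℕ}

/-- bcirc is an injective algebra homomorphism w.r.t. the T-product. -/
theorem bcirc_algHom {n p : ℕ} [NeZero p] :
    (∀ A B : Fin p → Matrix (Fin n) (Fin n) ℝ, bcirc (A + B) = bcirc A + bcirc B) ∧
    (∀ (c : ℝ) (A : Fin p → Matrix (Fin n) (Fin n) ℝ), bcirc (c • A) = c • bcirc A) ∧
    (∀ A B : Fin p → Matrix (Fin n) (Fin n) ℝ, bcirc (tProd A B) = bcirc A * bcirc B) ∧
    bcirc (tid (Fin n) : Fin p → Matrix (Fin n) (Fin n) ℝ) = 1 ∧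
    Function.Injective
      (bcirc : (Fin p → Matrix (Fin n) (Fin n) ℝ) → Matrix (Fin p × Fin n) (Fin p × Fin n) ℝ) := by

  refine ⟨?_, ?_, ?_, ?_, ?_⟩
  · intro A B; ext ⟨i,a⟩ ⟨j,b⟩; simp [bcirc]
  · intro c A; ext ⟨i,a⟩ ⟨j,b⟩; simp [bcirc]
  · intro A B
    ext ⟨i,a⟩ ⟨j,b⟩
    simp only [bcirc, tProd, Matrix.mul_apply, Matrix.of_apply, Matrix.sum_apply,
      Fintype.sum_prod_type]
    refine Finset.sum_nbij' (fun m => m + j) (fun m => m - j) (by simp) (by simp)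
      (by intro m _; simp) (by intro m _; simp) ?_
    intro m _
    have : i - j - m = i - (m + j) := by rw [sub_add_eq_sub_sub, sub_right_comm]
    simp [this]
  · ext ⟨i,a⟩ ⟨j,b⟩
    simp only [bcirc, tid, Matrix.of_apply, Matrix.one_apply, Prod.mk.injEq, sub_eq_zero]
    by_cases h : i = j <;> by_cases h2 : a = b <;> simp [h, h2, Matrix.one_apply]
  · intro A B h
    funext k
    ext a b
    have := congrFun (congrFun h (k, a)) (0, b)
    simpa [bcirc] using this
end

section
/- (T-Schur complement) Let A ∈ ℝ^{m×m×p} be symmetric T-positive definite, C ∈ ℝ^{n×n×p} symmetric, and B ∈ ℝ^{m×n×p}. Then the block tensor [[A, B],[Bᵀ, C]] ∈ ℝ^{(m+n)×(m+n)×p} is symmetric T-positive semidefinite (resp. T-positive definite) if and only if C − Bᵀ * A⁻¹ * B is symmetric T-positive semidefinite (resp. T-positive definite). -/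
open Matrix BigOperators

variable {p : ℕ}

/-- matrix Frobenius inner product -/
def m2i {I J : Type*} [Fintype I] [Fintype J] (P Q : Matrix I J ℝ) : ℝ :=
  ∑ i, ∑ j, P i j * Q i j

lemma m2i_mul_left {I J K : Type*} [Fintype I] [Fintype J] [Fintype K]
    (N : Matrix I J ℝ) (P : Matrix J K ℝ) (Q : Matrix I K ℝ) :
    m2i (N * P) Q = m2i P (Nᵀ * Q) := by
  simp only [m2i, Matrix.mul_apply, Finset.sum_mul, Finset.mul_sum, Matrix.transpose_apply]
  conv_lhs => enter [2, i]; rw [Finset.sum_comm]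
  rw [Finset.sum_comm]
  refine Finset.sum_congr rfl fun a _ => ?_
  rw [Finset.sum_comm]
  exact Finset.sum_congr rfl fun j _ => Finset.sum_congr rfl fun i _ => by ring

lemma m2i_sum_left {I J : Type*} [Fintype I] [Fintype J] {α : Type*} (s : Finset α)
    (P : α → Matrix I J ℝ) (Q : Matrix I J ℝ) :
    m2i (∑ l ∈ s, P l) Q = ∑ l ∈ s, m2i (P l) Q := by
  simp only [m2i, Matrix.sum_apply, Finset.sum_mul]
  conv_lhs => enter [2, i]; rw [Finset.sum_comm]
  rw [Finset.sum_comm]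

lemma m2i_sum_right {I J : Type*} [Fintype I] [Fintype J] {α : Type*} (s : Finset α)
    (P : Matrix I J ℝ) (Q : α → Matrix I J ℝ) :
    m2i P (∑ l ∈ s, Q l) = ∑ l ∈ s, m2i P (Q l) := by
  simp only [m2i, Matrix.sum_apply, Finset.mul_sum]
  conv_lhs => enter [2, i]; rw [Finset.sum_comm]
  rw [Finset.sum_comm]

lemma tinner_eq_sum_m2i {I J : Type*} [Fintype I] [Fintype J]
    (X Y : Fin p → Matrix I J ℝ) : tinner X Y = ∑ k, m2i (X k) (Y k) := rfl

lemma tinner_tProd_left {I J K : Type*} [NeZero p] [Fintype I] [Fintype J] [Fintype K]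
    (M : Fin p → Matrix I J ℝ) (X : Fin p → Matrix J K ℝ) (Y : Fin p → Matrix I K ℝ) :
    tinner (tProd M X) Y = tinner X (tProd (ttrans M) Y) := by
  simp only [tinner_eq_sum_m2i, tProd, m2i_sum_left, m2i_sum_right]
  rw [Finset.sum_comm]
  refine Finset.sum_congr rfl fun l _ => Finset.sum_congr rfl fun k _ => ?_
  rw [m2i_mul_left]
  congr 2
  simp [ttrans, neg_sub]

-- identities
lemma tid_tProd {I K : Type*} [NeZero p] [Fintype I] [DecidableEq I]
    (X : Fin p → Matrix I K ℝ) : tProd (tid I) X = X := by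
  funext k
  simp only [tProd, tid, sub_eq_zero]
  rw [Finset.sum_eq_single k]
  · simp
  · intro b _ hb; simp [Ne.symm hb]
  · simp

lemma tProd_tid {I K : Type*} [NeZero p] [Fintype K] [DecidableEq K]
    (X : Fin p → Matrix I K ℝ) : tProd X (tid K) = X := by
  funext k
  simp only [tProd, tid]
  rw [Finset.sum_eq_single 0]
  · simp
  · intro b _ hb; simp [hb]
  · simp

lemma ttrans_ttrans {I J : Type*} (A : Fin p → Matrix I J ℝ) : ttrans (ttrans A) = A := by
  funext k; simp [ttrans]

lemma ttrans_tid {I : Type*} [NeZero p] [Fintype I] [DecidableEq I] :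
    ttrans (tid I (p := p)) = tid I := by
  funext k
  simp [ttrans, tid, neg_eq_zero]
  split <;> simp

lemma ttrans_tProd {I J K : Type*} [NeZero p] [Fintype J]
    (A : Fin p → Matrix I J ℝ) (B : Fin p → Matrix J K ℝ) :
    ttrans (tProd A B) = tProd (ttrans B) (ttrans A) := by
  funext k
  simp only [ttrans, tProd, Matrix.transpose_sum, Matrix.transpose_mul]
  refine Fintype.sum_equiv (Equiv.addRight k) _ _ fun j => ?_
  simp only [Equiv.coe_addRight, add_sub_cancel_right]
  have h1 : -k - j = -(j + k) := by abel
  have h2 : -(k - (j + k)) = j := by abel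
  rw [h1, h2]

-- linearity / zero
lemma tProd_zero_right {I J K : Type*} [NeZero p] [Fintype J]
    (A : Fin p → Matrix I J ℝ) : tProd A (0 : Fin p → Matrix J K ℝ) = 0 := by
  funext k; simp [tProd]

lemma tProd_add_right {I J K : Type*} [NeZero p] [Fintype J]
    (A : Fin p → Matrix I J ℝ) (X Y : Fin p → Matrix J K ℝ) :
    tProd A (X + Y) = tProd A X + tProd A Y := by
  funext k; simp [tProd, Matrix.mul_add, Finset.sum_add_distrib]

lemma tProd_sub_left {I J K : Type*} [NeZero p] [Fintype J]
    (A B : Fin p → Matrix I J ℝ) (X : Fin p → Matrix J K ℝ) :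
    tProd (A - B) X = tProd A X - tProd B X := by
  funext k; simp [tProd, Matrix.sub_mul, Finset.sum_sub_distrib]

lemma tinner_add_left {I J : Type*} [Fintype I] [Fintype J]
    (X Y Z : Fin p → Matrix I J ℝ) :
    tinner (X + Y) Z = tinner X Z + tinner Y Z := by
  simp [tinner, add_mul, Finset.sum_add_distrib]

lemma tinner_add_right {I J : Type*} [Fintype I] [Fintype J]
    (X Y Z : Fin p → Matrix I J ℝ) :
    tinner X (Y + Z) = tinner X Y + tinner X Z := by
  simp [tinner, mul_add, Finset.sum_add_distrib]

lemma tinner_sub_right {I J : Type*} [Fintype I] [Fintype J]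
    (X Y Z : Fin p → Matrix I J ℝ) :
    tinner X (Y - Z) = tinner X Y - tinner X Z := by
  simp [tinner, mul_sub, Finset.sum_sub_distrib]

lemma tinner_zero_left {I J : Type*} [Fintype I] [Fintype J]
    (Y : Fin p → Matrix I J ℝ) : tinner 0 Y = 0 := by
  simp [tinner]

-- block lemmas
lemma tinner_fromRows {m n : ℕ} [NeZero p]
    (U P : Fin p → Matrix (Fin m) (Fin 1) ℝ) (V Q : Fin p → Matrix (Fin n) (Fin 1) ℝ) :
    tinner (fun k => Matrix.fromRows (U k) (V k)) (fun k => Matrix.fromRows (P k) (Q k)) =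
      tinner U P + tinner V Q := by
  simp [tinner, Fintype.sum_sum_type, Finset.sum_add_distrib]

lemma tProd_block {m n : ℕ} [NeZero p]
    (A : Fin p → Matrix (Fin m) (Fin m) ℝ) (B : Fin p → Matrix (Fin m) (Fin n) ℝ)
    (Bt : Fin p → Matrix (Fin n) (Fin m) ℝ) (C : Fin p → Matrix (Fin n) (Fin n) ℝ)
    (U : Fin p → Matrix (Fin m) (Fin 1) ℝ) (V : Fin p → Matrix (Fin n) (Fin 1) ℝ) :
    tProd (fun k => Matrix.fromBlocks (A k) (B k) (Bt k) (C k))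
        (fun k => Matrix.fromRows (U k) (V k)) =
      fun k => Matrix.fromRows ((tProd A U + tProd B V) k) ((tProd Bt U + tProd C V) k) := by
  funext k
  ext i c
  cases i with
  | inl i =>
      simp [tProd, Matrix.fromBlocks_mul_fromRows, Matrix.sum_apply, Finset.sum_add_distrib]
  | inr i =>
      simp [tProd, Matrix.fromBlocks_mul_fromRows, Matrix.sum_apply, Finset.sum_add_distrib]

lemma tProd_assoc {I J K L : Type*} [NeZero p] [Fintype J] [Fintype K]
    (A : Fin p → Matrix I J ℝ) (B : Fin p → Matrix J K ℝ) (C : Fin p → Matrix K L ℝ) :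
    tProd (tProd A B) C = tProd A (tProd B C) := by
  funext k
  simp only [tProd, Finset.sum_mul, Finset.mul_sum, Matrix.sum_mul, Matrix.mul_sum]
  conv_rhs => rw [Finset.sum_comm]
  refine Finset.sum_congr rfl fun l _ => ?_
  refine Fintype.sum_equiv (Equiv.addRight l) _ _ fun j => ?_
  simp only [Equiv.coe_addRight, Matrix.mul_assoc, add_sub_cancel_right,
    sub_add_eq_sub_sub, sub_right_comm]

lemma ttrans_sub {I J : Type*} (X Y : Fin p → Matrix I J ℝ) :
    ttrans (X - Y) = ttrans X - ttrans Y := by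
  funext k; simp [ttrans, Matrix.transpose_sub]

/-- T-Schur complement criterion. -/
theorem t_schur_complement {m n p : ℕ} [NeZero p]
    (A : Fin p → Matrix (Fin m) (Fin m) ℝ)
    (B : Fin p → Matrix (Fin m) (Fin n) ℝ)
    (C : Fin p → Matrix (Fin n) (Fin n) ℝ)
    (Ainv : Fin p → Matrix (Fin m) (Fin m) ℝ)
    (hA : TPD A) (hC : ttrans C = C)
    (hinv₁ : tProd A Ainv = tid (Fin m)) (hinv₂ : tProd Ainv A = tid (Fin m)) :
    (TPSD (fun k => Matrix.fromBlocks (A k) (B k) (ttrans B k) (C k)) ↔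
      TPSD (C - tProd (tProd (ttrans B) Ainv) B)) ∧
    (TPD (fun k => Matrix.fromBlocks (A k) (B k) (ttrans B k) (C k)) ↔
      TPD (C - tProd (tProd (ttrans B) Ainv) B)) := by
  have hAt : ttrans A = A := hA.1
  -- Ainv is symmetric
  have hAinvL : tProd (ttrans Ainv) A = tid (Fin m) := by
    have h := congrArg ttrans hinv₁
    rwa [ttrans_tProd, hAt, ttrans_tid] at h
  have hAinvT : ttrans Ainv = Ainv := by
    calc ttrans Ainv = tProd (ttrans Ainv) (tProd A Ainv) := by rw [hinv₁, tProd_tid]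
      _ = tProd (tProd (ttrans Ainv) A) Ainv := (tProd_assoc _ _ _).symm
      _ = Ainv := by rw [hAinvL, tid_tProd]
  -- symmetry of the Schur complement
  have hG : ttrans (tProd (tProd (ttrans B) Ainv) B) = tProd (tProd (ttrans B) Ainv) B := by
    rw [ttrans_tProd, ttrans_tProd, ttrans_ttrans, hAinvT, ← tProd_assoc]
  have hSsym : ttrans (C - tProd (tProd (ttrans B) Ainv) B)
      = C - tProd (tProd (ttrans B) Ainv) B := by
    rw [ttrans_sub, hC, hG]
  -- symmetry of the block tensor
  have hblksym : ttrans (fun k => Matrix.fromBlocks (A k) (B k) (ttrans B k) (C k))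
      = fun k => Matrix.fromBlocks (A k) (B k) (ttrans B k) (C k) := by
    funext k
    have hAk : (A (-k))ᵀ = A k := congrFun hAt k
    have hCk : (C (-k))ᵀ = C k := congrFun hC k
    show (Matrix.fromBlocks (A (-k)) (B (-k)) (ttrans B (-k)) (C (-k)))ᵀ = _
    rw [Matrix.fromBlocks_transpose, hAk, hCk]
    have hBk : ((ttrans B) (-k))ᵀ = B k := by
      show ((B (- -k))ᵀ)ᵀ = B k
      rw [neg_neg, Matrix.transpose_transpose]
    rw [hBk]
    rfl
  -- auxiliary products
  have hAK : tProd A (tProd Ainv B) = B := by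
    rw [← tProd_assoc, hinv₁, tid_tProd]
  have hKtT : ttrans (tProd Ainv B) = tProd (ttrans B) Ainv := by
    rw [ttrans_tProd, hAinvT]
  have hBtAinvA : tProd (tProd (ttrans B) Ainv) A = ttrans B := by
    rw [tProd_assoc, hinv₂, tProd_tid]
  -- the key quadratic-form identity (completion of squares)
  have key : ∀ (U : Fin p → Matrix (Fin m) (Fin 1) ℝ) (V : Fin p → Matrix (Fin n) (Fin 1) ℝ),
      tinner (fun k => Matrix.fromRows (U k) (V k))
        (tProd (fun k => Matrix.fromBlocks (A k) (B k) (ttrans B k) (C k))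
          (fun k => Matrix.fromRows (U k) (V k)))
      = tinner (U + tProd (tProd Ainv B) V) (tProd A (U + tProd (tProd Ainv B) V))
        + tinner V (tProd (C - tProd (tProd (ttrans B) Ainv) B) V) := by
    intro U V
    rw [tProd_block A B (ttrans B) C U V, tinner_fromRows, tinner_add_right, tinner_add_right]
    have hW : tProd A (U + tProd (tProd Ainv B) V) = tProd A U + tProd B V := by
      rw [tProd_add_right, ← tProd_assoc, ← tProd_assoc, hinv₁, tid_tProd]
    rw [hW, tinner_add_left, tinner_add_right, tinner_add_right]
    have h3 : tinner (tProd (tProd Ainv B) V) (tProd A U) = tinner V (tProd (ttrans B) U) := by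
      rw [tinner_tProd_left, hKtT, ← tProd_assoc, hBtAinvA]
    have h4 : tinner (tProd (tProd Ainv B) V) (tProd B V)
        = tinner V (tProd (tProd (tProd (ttrans B) Ainv) B) V) := by
      rw [tinner_tProd_left, hKtT, ← tProd_assoc]
    have h5 : tinner V (tProd (C - tProd (tProd (ttrans B) Ainv) B) V)
        = tinner V (tProd C V) - tinner V (tProd (tProd (tProd (ttrans B) Ainv) B) V) := by
      rw [tProd_sub_left, tinner_sub_right]
    rw [h3, h4, h5]
    ring
  constructor
  · constructor
    · rintro ⟨-, hq⟩
      refine ⟨hSsym, fun V => ?_⟩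
      set U : Fin p → Matrix (Fin m) (Fin 1) ℝ := -(tProd (tProd Ainv B) V) with hU
      have e := key U V
      have hW0 : U + tProd (tProd Ainv B) V = 0 := by rw [hU]; exact neg_add_cancel _
      rw [hW0, tinner_zero_left, zero_add] at e
      have := hq (fun k => Matrix.fromRows (U k) (V k))
      linarith
    · rintro ⟨-, hq⟩
      refine ⟨hblksym, fun X => ?_⟩
      have hX : X = fun k => Matrix.fromRows ((X k).toRows₁) ((X k).toRows₂) := by
        funext k; exact (Matrix.fromRows_toRows _).symm
      rw [hX, key]
      have h1 : 0 ≤ tinner ((fun k => (X k).toRows₁) + tProd (tProd Ainv B) fun k => (X k).toRows₂)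
          (tProd A ((fun k => (X k).toRows₁) + tProd (tProd Ainv B) fun k => (X k).toRows₂)) := by
        by_cases hW : ((fun k => (X k).toRows₁) + tProd (tProd Ainv B) fun k => (X k).toRows₂) = 0
        · rw [hW, tinner_zero_left]
        · exact le_of_lt (hA.2 _ hW)
      have h2 := hq (fun k => (X k).toRows₂)
      linarith
  · constructor
    · rintro ⟨-, hq⟩
      refine ⟨hSsym, fun V hV => ?_⟩
      set U : Fin p → Matrix (Fin m) (Fin 1) ℝ := -(tProd (tProd Ainv B) V) with hU
      have e := key U V
      have hW0 : U + tProd (tProd Ainv B) V = 0 := by rw [hU]; exact neg_add_cancel _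
      rw [hW0, tinner_zero_left, zero_add] at e
      have hXne : (fun k => Matrix.fromRows (U k) (V k)) ≠ 0 := by
        intro h0
        apply hV
        funext k
        have h0k := congrFun h0 k
        calc V k = (Matrix.fromRows (U k) (V k)).toRows₂ := rfl
          _ = ((0 : Fin p → Matrix (Fin m ⊕ Fin n) (Fin 1) ℝ) k).toRows₂ := by rw [h0k]
          _ = 0 := rfl
      have := hq _ hXne
      linarith
    · rintro ⟨-, hq⟩
      refine ⟨hblksym, fun X hXne => ?_⟩
      have hX : X = fun k => Matrix.fromRows ((X k).toRows₁) ((X k).toRows₂) := by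
        funext k; exact (Matrix.fromRows_toRows _).symm
      rw [hX, key]
      set U : Fin p → Matrix (Fin m) (Fin 1) ℝ := fun k => (X k).toRows₁ with hUdef
      set V : Fin p → Matrix (Fin n) (Fin 1) ℝ := fun k => (X k).toRows₂ with hVdef
      have hUV : ¬(U = 0 ∧ V = 0) := by
        rintro ⟨hU0, hV0⟩
        apply hXne
        rw [hX]
        funext k
        have : U k = 0 := congrFun hU0 k
        have h2 : V k = 0 := congrFun hV0 k
        show Matrix.fromRows (U k) (V k) = 0
        rw [this, h2, Matrix.fromRows_zero]
      by_cases hV0 : V = 0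
      · have hU0 : U ≠ 0 := fun h => hUV ⟨h, hV0⟩
        have hW : U + tProd (tProd Ainv B) V = U := by
          rw [hV0, tProd_zero_right, add_zero]
        have h2 : tinner V (tProd (C - tProd (tProd (ttrans B) Ainv) B) V) = 0 := by
          rw [hV0, tinner_zero_left]
        rw [hW, h2, add_zero]
        exact hA.2 U hU0
      · have hpos := hq V hV0
        have h1 : 0 ≤ tinner (U + tProd (tProd Ainv B) V)
            (tProd A (U + tProd (tProd Ainv B) V)) := by
          by_cases hW : (U + tProd (tProd Ainv B) V) = 0
          · rw [hW, tinner_zero_left]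
          · exact le_of_lt (hA.2 _ hW)
        linarith
end

section
/- For symmetric T-positive semidefinite tensors A, B ∈ ℝ^{n×n×p}, the inequalities λ_min(A)·Tr(B) ≤ p·⟨A,B⟩ ≤ λ_max(A)·Tr(B) hold, where λ_min(A) and λ_max(A) are the smallest and largest eigenvalues of bcirc(A) and Tr(B) = trace(bcirc(B)). -/
/-!
Because `B` is symmetric, every entry of `A` meets the matching entry of `B` once in each of
the `p` block rows of `bcirc A * bcirc B`, so `trace (bcirc A * bcirc B) = p * ⟨A, B⟩`.
Writing `bcirc A = U diag(λ) Uᵀ` with `U` orthogonal, this trace is `∑ λᵢ (Uᵀ bcirc B U)ᵢᵢ`: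
a combination of the eigenvalues of `bcirc A` with weights that are nonnegative, since
`bcirc B` is positive semidefinite, and sum to `trace (bcirc B)`.
-/

open Matrix BigOperators

variable {p : ℕ}

namespace Matrix.IsHermitian

variable {m : Type*} [Fintype m] [DecidableEq m] {M : Matrix m m ℝ} (hM : M.IsHermitian)

lemma trace_mul_eq_sum_eigenvalues_mul (N : Matrix m m ℝ) :
    (M * N).trace = ∑ i, hM.eigenvalues i *
      (star (hM.eigenvectorUnitary : Matrix m m ℝ) * N * hM.eigenvectorUnitary) i i := by
  conv_lhs => rw [hM.spectral_theorem, Unitary.conjStarAlgAut_apply]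
  rw [mul_assoc, mul_assoc, trace_mul_comm, mul_assoc, trace]
  simp [diagonal_mul]

lemma trace_star_eigenvectorUnitary_mul_mul (N : Matrix m m ℝ) :
    (star (hM.eigenvectorUnitary : Matrix m m ℝ) * N * hM.eigenvectorUnitary).trace =
      N.trace := by
  rw [trace_mul_cycle, Unitary.mul_star_self_of_mem hM.eigenvectorUnitary.2, one_mul]

variable {N : Matrix m m ℝ} (hN : N.PosSemidef)
include hN

lemma iInf_eigenvalues_mul_trace_le : (⨅ i, hM.eigenvalues i) * N.trace ≤ (M * N).trace := by
  rw [hM.trace_mul_eq_sum_eigenvalues_mul, ← hM.trace_star_eigenvectorUnitary_mul_mul,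
    trace, Finset.mul_sum]
  exact Finset.sum_le_sum fun i _ => mul_le_mul_of_nonneg_right
    (ciInf_le (Finite.bddBelow_range _) i) (hN.conjTranspose_mul_mul_same _).diag_nonneg

lemma trace_mul_le_iSup_eigenvalues_mul_trace :
    (M * N).trace ≤ (⨆ i, hM.eigenvalues i) * N.trace := by
  rw [hM.trace_mul_eq_sum_eigenvalues_mul, ← hM.trace_star_eigenvectorUnitary_mul_mul,
    trace, Finset.mul_sum]
  exact Finset.sum_le_sum fun i _ => mul_le_mul_of_nonneg_right
    (le_ciSup (Finite.bddAbove_range _) i) (hN.conjTranspose_mul_mul_same _).diag_nonneg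

end Matrix.IsHermitian

lemma Fintype.sum_sum_sub {G M : Type*} [AddGroup G] [Fintype G] [AddCommMonoid M]
    (f : G → M) : ∑ k, ∑ l, f (k - l) = Fintype.card G • ∑ g, f g := by
  rw [← Finset.card_univ, ← Finset.sum_const]
  exact Finset.sum_congr rfl fun k _ => Equiv.sum_comp (Equiv.subLeft k) f

section BlockCirculant

variable {I J : Type*}

lemma bcirc_ttrans (A : Fin p → Matrix I J ℝ) : bcirc (ttrans A) = (bcirc A)ᵀ := by
  ext ⟨k, j⟩ ⟨l, i⟩
  have : NeZero p := NeZero.of_pos k.pos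
  simp [bcirc, ttrans, neg_sub]

lemma isHermitian_bcirc_of_ttrans_eq {A : Fin p → Matrix I I ℝ} (hA : ttrans A = A) :
    (bcirc A).IsHermitian := by
  rw [IsHermitian, conjTranspose_eq_transpose_of_trivial, ← bcirc_ttrans, hA]

lemma trace_bcirc_mul_bcirc [Fintype I] [Fintype J] (A : Fin p → Matrix I J ℝ)
    (B : Fin p → Matrix J I ℝ) : (bcirc A * bcirc B).trace = p * tinner A (ttrans B) := by
  rcases Nat.eq_zero_or_pos p with rfl | hp
  · simp [trace, tinner]
  have : NeZero p := NeZero.of_pos hp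
  calc (bcirc A * bcirc B).trace
      = ∑ k : Fin p, ∑ l : Fin p, ∑ i, ∑ j, A (k - l) i j * ttrans B (k - l) i j := by
        simp only [trace, diag_apply, mul_apply, bcirc, of_apply, ttrans, transpose_apply,
          neg_sub, Fintype.sum_prod_type]
        exact Finset.sum_congr rfl fun k _ => Finset.sum_comm
    _ = p * tinner A (ttrans B) := by
        rw [Fintype.sum_sum_sub fun g => ∑ i, ∑ j, A g i j * ttrans B g i j, Fintype.card_fin,
          nsmul_eq_mul, tinner]

/-- The paper's `fold`: the `I × 1 × p` tensor whose unfolding is `x`. -/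
def tfold (x : Fin p × I → ℝ) : Fin p → Matrix I (Fin 1) ℝ :=
  fun k => replicateCol (Fin 1) fun i => x (k, i)

lemma tinner_tfold_tProd [Fintype I] (A : Fin p → Matrix I I ℝ) (x : Fin p × I → ℝ) :
    tinner (tfold x) (tProd A (tfold x)) = x ⬝ᵥ bcirc A *ᵥ x := by
  simp [tinner, tProd, tfold, bcirc, dotProduct, mulVec, mul_apply, Fintype.sum_prod_type,
    Finset.mul_sum, Matrix.sum_apply]

lemma TPSD.bcirc_posSemidef [Fintype I] {A : Fin p → Matrix I I ℝ} (hA : TPSD A) :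
    (bcirc A).PosSemidef :=
  .of_dotProduct_mulVec_nonneg (isHermitian_bcirc_of_ttrans_eq hA.1) fun x => by
    simpa [tinner_tfold_tProd] using hA.2 (tfold x)

end BlockCirculant

theorem tpsd_eigenvalue_trace_bounds_general {n p : ℕ}
    (A B : Fin p → Matrix (Fin n) (Fin n) ℝ) (hB : TPSD B)
    (hH : (bcirc A).IsHermitian) :
    (⨅ i, hH.eigenvalues i) * (bcirc B).trace ≤ (p : ℝ) * tinner A B ∧
    (p : ℝ) * tinner A B ≤ (⨆ i, hH.eigenvalues i) * (bcirc B).trace := by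
  have hBpsd := hB.bcirc_posSemidef
  have htrace : (bcirc A * bcirc B).trace = p * tinner A B := by
    rw [trace_bcirc_mul_bcirc, hB.1]
  rw [← htrace]
  exact ⟨hH.iInf_eigenvalues_mul_trace_le hBpsd, hH.trace_mul_le_iSup_eigenvalues_mul_trace hBpsd⟩

/-- λ_min(A)·Tr(B) ≤ p·⟨A,B⟩ ≤ λ_max(A)·Tr(B) for symmetric T-PSD A, B. -/
theorem tpsd_eigenvalue_trace_bounds {n p : ℕ}
    (A B : Fin p → Matrix (Fin n) (Fin n) ℝ) (hA : TPSD A) (hB : TPSD B)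
    (hH : (bcirc A).IsHermitian) :
    (⨅ i, hH.eigenvalues i) * (bcirc B).trace ≤ (p : ℝ) * tinner A B ∧
    (p : ℝ) * tinner A B ≤ (⨆ i, hH.eigenvalues i) * (bcirc B).trace :=
  tpsd_eigenvalue_trace_bounds_general A B hB hH
end
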